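/- arXiv:0711.0499 — 3 statements merged into one kernel-verified Lean document; each statement's English description precedes it below -/
import Mathlib

section
/- Let L₁ = ℤ⁴, L₇ = {(a,b,c,d) ∈ ℤ⁴ : a+b+c and b+c+d are both even}, and P(x) = b²c² + 18abcd − 4ac³ − 4b³d − 27a²d². Then L₇ is the disjoint union of 2L₁ = {(a,b,c,d) : all coordinates even} and {x ∈ ℤ⁴ : P(x) ≡ 1 (mod 8)}. -/
/-- Discriminant of an integral binary cubic form. -/
def discZ (x : ℤ × ℤ × ℤ × ℤ) : ℤ :=
  match x with
  | (a, b, c, d) =>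
    b ^ 2 * c ^ 2 + 18 * a * b * c * d - 4 * a * c ^ 3 - 4 * b ^ 3 * d - 27 * a ^ 2 * d ^ 2

def L₁double : Set (ℤ × ℤ × ℤ × ℤ) :=
  {x | Even x.1 ∧ Even x.2.1 ∧ Even x.2.2.1 ∧ Even x.2.2.2}

def L₇ : Set (ℤ × ℤ × ℤ × ℤ) :=
  {x | Even (x.1 + x.2.1 + x.2.2.1) ∧ Even (x.2.1 + x.2.2.1 + x.2.2.2)}

lemma even_iff_zmod8 (n : ℤ) : Even n ↔ 4 * (n : ZMod 8) = 0 := by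
  have : (4 : ZMod 8) * (n : ZMod 8) = ((4 * n : ℤ) : ZMod 8) := by push_cast; ring
  rw [this, ZMod.intCast_zmod_eq_zero_iff_dvd, even_iff_two_dvd]
  constructor
  · rintro ⟨k, rfl⟩; exact ⟨k, by ring⟩
  · rintro ⟨k, hk⟩; exact ⟨k, by omega⟩

lemma key : ∀ A B C D : ZMod 8,
    ((4 * (A + B + C) = 0 ∧ 4 * (B + C + D) = 0) ↔
      ((4 * A = 0 ∧ 4 * B = 0 ∧ 4 * C = 0 ∧ 4 * D = 0) ∨
        B ^ 2 * C ^ 2 + 18 * A * B * C * D - 4 * A * C ^ 3 - 4 * B ^ 3 * D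
          - 27 * A ^ 2 * D ^ 2 = 1)) ∧
    ¬((4 * A = 0 ∧ 4 * B = 0 ∧ 4 * C = 0 ∧ 4 * D = 0) ∧
        B ^ 2 * C ^ 2 + 18 * A * B * C * D - 4 * A * C ^ 3 - 4 * B ^ 3 * D
          - 27 * A ^ 2 * D ^ 2 = 1) := by decide

lemma disc_cast (a b c d : ℤ) :
    discZ (a, b, c, d) ≡ 1 [ZMOD 8] ↔
      ((b : ZMod 8) ^ 2 * c ^ 2 + 18 * a * b * c * d - 4 * a * c ^ 3 - 4 * b ^ 3 * d
        - 27 * a ^ 2 * d ^ 2 = 1) := by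
  have h : ((discZ (a, b, c, d) : ℤ) : ZMod 8) =
      (b : ZMod 8) ^ 2 * c ^ 2 + 18 * a * b * c * d - 4 * a * c ^ 3 - 4 * b ^ 3 * d
        - 27 * a ^ 2 * d ^ 2 := by unfold discZ; push_cast; ring
  rw [show ((8:ℤ)) = ((8:ℕ):ℤ) by norm_cast, ← ZMod.intCast_eq_intCast_iff, h]; norm_num

theorem stmt4 :
    L₇ = L₁double ∪ {x | discZ x ≡ 1 [ZMOD 8]} ∧
      L₁double ∩ {x | discZ x ≡ 1 [ZMOD 8]} = ∅ := by
  constructor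
  · ext ⟨a, b, c, d⟩
    simp only [L₇, L₁double, Set.mem_setOf_eq, Set.mem_union]
    rw [even_iff_zmod8, even_iff_zmod8, even_iff_zmod8 a, even_iff_zmod8 b,
      even_iff_zmod8 c, even_iff_zmod8 d, disc_cast]
    push_cast
    exact (key a b c d).1
  · ext ⟨a, b, c, d⟩
    simp only [L₁double, Set.mem_inter_iff, Set.mem_setOf_eq, Set.mem_empty_iff_false,
      iff_false]
    rw [even_iff_zmod8 a, even_iff_zmod8 b, even_iff_zmod8 c, even_iff_zmod8 d, disc_cast]
    exact fun ⟨h1, h2⟩ => (key a b c d).2 ⟨⟨h1.1, h1.2.1, h1.2.2.1, h1.2.2.2⟩, h2⟩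
end

section
/- Define L₈ = {(a,b,c,d) ∈ ℤ⁴ : 3 ∣ b, 3 ∣ c, 2 ∣ (a + b/3 + d), 2 ∣ (a + c/3 + d)} and L₂ = {(a,b,c,d) ∈ ℤ⁴ : 3 ∣ b, 3 ∣ c}, and for x ∈ L₂ set Q(x) = P(x)/27 where P is the discriminant. Then L₈ is the disjoint union of 2L₂ and {x ∈ L₂ : Q(x) ≡ 7 (mod 8)}. -/
def L₂ : Set (ℤ × ℤ × ℤ × ℤ) := {x | 3 ∣ x.2.1 ∧ 3 ∣ x.2.2.1}

def L₈ : Set (ℤ × ℤ × ℤ × ℤ) :=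
  {x | 3 ∣ x.2.1 ∧ 3 ∣ x.2.2.1 ∧ 2 ∣ (x.1 + x.2.1 / 3 + x.2.2.2) ∧
    2 ∣ (x.1 + x.2.2.1 / 3 + x.2.2.2)}

def doubleL₂ : Set (ℤ × ℤ × ℤ × ℤ) := (fun y => (2 : ℤ) • y) '' L₂

def fpar (x : ZMod 8) : ZMod 2 := (x.val : ZMod 2)

lemma fpar_cast (x : ℤ) : ((x : ZMod 2)) = fpar (x : ZMod 8) := by
  have h := map_intCast (ZMod.castHom (by norm_num : (2:ℕ) ∣ 8) (ZMod 2)) x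
  rw [ZMod.castHom_apply] at h
  rw [fpar, ZMod.natCast_val, h]

lemma zmod_key : ∀ A B C D : ZMod 8,
    (((fpar (A+B+D) = 0 ∧ fpar (A+C+D) = 0) ↔
       ((fpar A = 0 ∧ fpar B = 0 ∧ fpar C = 0 ∧ fpar D = 0) ∨
        3*B^2*C^2+6*A*B*C*D-4*A*C^3-4*B^3*D-A^2*D^2 = 7)) ∧
     ((fpar A = 0 ∧ fpar B = 0 ∧ fpar C = 0 ∧ fpar D = 0) →
       3*B^2*C^2+6*A*B*C*D-4*A*C^3-4*B^3*D-A^2*D^2 ≠ 7)) := by decide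

lemma int_key (a b c d : ℤ) :
    ((2 ∣ a+b+d ∧ 2 ∣ a+c+d) ↔
      ((2∣a ∧ 2∣b ∧ 2∣c ∧ 2∣d) ∨
        (3*b^2*c^2+6*a*b*c*d-4*a*c^3-4*b^3*d-a^2*d^2) ≡ 7 [ZMOD 8])) ∧
    ((2∣a ∧ 2∣b ∧ 2∣c ∧ 2∣d) →
      ¬ (3*b^2*c^2+6*a*b*c*d-4*a*c^3-4*b^3*d-a^2*d^2) ≡ 7 [ZMOD 8]) := by
  have hdvd : ∀ x : ℤ, (2:ℤ) ∣ x ↔ fpar (x : ZMod 8) = 0 := by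
    intro x
    rw [← fpar_cast]
    exact_mod_cast (ZMod.intCast_zmod_eq_zero_iff_dvd x 2).symm
  have hmod : ((3*b^2*c^2+6*a*b*c*d-4*a*c^3-4*b^3*d-a^2*d^2) ≡ 7 [ZMOD 8]) ↔
      (3*(b:ZMod 8)^2*(c:ZMod 8)^2+6*(a:ZMod 8)*(b:ZMod 8)*(c:ZMod 8)*(d:ZMod 8)
        -4*(a:ZMod 8)*(c:ZMod 8)^3-4*(b:ZMod 8)^3*(d:ZMod 8)
        -(a:ZMod 8)^2*(d:ZMod 8)^2 = 7) := by
    rw [show ((3*b^2*c^2+6*a*b*c*d-4*a*c^3-4*b^3*d-a^2*d^2 : ℤ) ≡ 7 [ZMOD 8]) ↔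
        (((3*b^2*c^2+6*a*b*c*d-4*a*c^3-4*b^3*d-a^2*d^2 : ℤ) : ZMod 8) = ((7:ℤ) : ZMod 8))
        from (ZMod.intCast_eq_intCast_iff _ _ _).symm]
    push_cast
    norm_num
  have key := zmod_key (a : ZMod 8) (b : ZMod 8) (c : ZMod 8) (d : ZMod 8)
  rw [hmod, hdvd, hdvd, hdvd, hdvd, hdvd, hdvd]
  push_cast
  exact key

lemma mem_double (a b' c' d : ℤ) :
    (a, 3*b', 3*c', d) ∈ doubleL₂ ↔ (2∣a ∧ 2∣b' ∧ 2∣c' ∧ 2∣d) := by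
  constructor
  · rintro ⟨⟨a₀, b₀, c₀, d₀⟩, hmem, heq⟩
    simp only [Prod.smul_def, smul_eq_mul, Prod.ext_iff] at heq
    simp only [L₂, Set.mem_setOf_eq] at hmem
    obtain ⟨⟨k, hk⟩, ⟨l, hl⟩⟩ := hmem
    refine ⟨⟨a₀, heq.1.symm⟩, ⟨k, by omega⟩, ⟨l, by omega⟩, ⟨d₀, heq.2.2.2.symm⟩⟩
  · rintro ⟨⟨a₁, rfl⟩, ⟨b₁, rfl⟩, ⟨c₁, rfl⟩, ⟨d₁, rfl⟩⟩
    exact ⟨(a₁, 3*b₁, 3*c₁, d₁), ⟨⟨b₁, rfl⟩, ⟨c₁, rfl⟩⟩,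
      by simp [Prod.smul_def, smul_eq_mul]; ring_nf; tauto⟩

lemma disc_div (a b' c' d : ℤ) :
    discZ (a, 3*b', 3*c', d) / 27
      = 3*b'^2*c'^2+6*a*b'*c'*d-4*a*c'^3-4*b'^3*d-a^2*d^2 := by
  have : discZ (a, 3*b', 3*c', d)
      = 27 * (3*b'^2*c'^2+6*a*b'*c'*d-4*a*c'^3-4*b'^3*d-a^2*d^2) := by
    simp [discZ]; ring
  rw [this, Int.mul_ediv_cancel_left _ (by norm_num)]

theorem stmt8 :
    L₈ = doubleL₂ ∪ {x ∈ L₂ | discZ x / 27 ≡ 7 [ZMOD 8]} ∧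
      doubleL₂ ∩ {x ∈ L₂ | discZ x / 27 ≡ 7 [ZMOD 8]} = ∅ := by
  constructor
  · ext ⟨a, b, c, d⟩
    simp only [L₈, L₂, Set.mem_setOf_eq, Set.mem_union, Set.mem_sep_iff]
    constructor
    · rintro ⟨⟨b', rfl⟩, ⟨c', rfl⟩, h1, h2⟩
      rw [Int.mul_ediv_cancel_left _ (by norm_num : (3:ℤ) ≠ 0)] at h1 h2
      rw [mem_double, disc_div]
      rcases ((int_key a b' c' d).1.mp ⟨h1, h2⟩) with h | h
      · exact Or.inl h
      · exact Or.inr ⟨⟨⟨b', rfl⟩, ⟨c', rfl⟩⟩, h⟩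
    · rintro (h | ⟨⟨⟨b', rfl⟩, ⟨c', rfl⟩⟩, hq⟩)
      · obtain ⟨⟨a₀, b₀, c₀, d₀⟩, hmem, heq⟩ := h
        simp only [Prod.smul_def, smul_eq_mul, Prod.ext_iff] at heq
        simp only [L₂, Set.mem_setOf_eq] at hmem
        obtain ⟨⟨k, hk⟩, ⟨l, hl⟩⟩ := hmem
        obtain ⟨ha, hb, hc, hd⟩ := heq
        subst ha hb hc hd
        refine ⟨⟨2*k, by omega⟩, ⟨2*l, by omega⟩, ?_, ?_⟩
        · rw [show (2*b₀) = 3*(2*k) by omega, Int.mul_ediv_cancel_left _ (by norm_num : (3:ℤ) ≠ 0)]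
          exact ⟨a₀ + k + d₀, by ring⟩
        · rw [show (2*c₀) = 3*(2*l) by omega, Int.mul_ediv_cancel_left _ (by norm_num : (3:ℤ) ≠ 0)]
          exact ⟨a₀ + l + d₀, by ring⟩
      · rw [disc_div] at hq
        have := (int_key a b' c' d).1.mpr (Or.inr hq)
        refine ⟨⟨b', rfl⟩, ⟨c', rfl⟩, ?_, ?_⟩ <;>
          rw [Int.mul_ediv_cancel_left _ (by norm_num : (3:ℤ) ≠ 0)]
        · exact this.1
        · exact this.2
  · ext ⟨a, b, c, d⟩
    simp only [Set.mem_inter_iff, Set.mem_empty_iff_false, iff_false, Set.mem_sep_iff,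
      L₂, Set.mem_setOf_eq, not_and]
    rintro hdbl ⟨⟨b', rfl⟩, ⟨c', rfl⟩⟩ hq
    rw [mem_double] at hdbl
    rw [disc_div] at hq
    exact (int_key a b' c' d).2 hdbl hq
end

section
/- Define L₁₀ = {(a,b,c,d) ∈ ℤ⁴ : 3 ∣ b, 3 ∣ c, 2 ∣ (a + b/3 + c/3), 2 ∣ (b/3 + c/3 + d)} and L₂ = {(a,b,c,d) ∈ ℤ⁴ : 3 ∣ b, 3 ∣ c}, and for x ∈ L₂ set Q(x) = P(x)/27 where P is the discriminant. Then L₁₀ is the disjoint union of 2L₂ and {x ∈ L₂ : Q(x) ≡ 3 (mod 8)}. -/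
def L₁₀ : Set (ℤ × ℤ × ℤ × ℤ) :=
  {x | 3 ∣ x.2.1 ∧ 3 ∣ x.2.2.1 ∧ 2 ∣ (x.1 + x.2.1 / 3 + x.2.2.1 / 3) ∧
    2 ∣ (x.2.1 / 3 + x.2.2.1 / 3 + x.2.2.2)}

/-!
Writing `x = (a, 3b, 3c, d)`, one has `P(x) = 27 Q(a, b, c, d)` with
`Q = 3b²c² + 6abcd − 4ac³ − 4b³d − a²d²`. A finite check in `ZMod 8` shows that `Q ≡ 3 (mod 8)`
exactly when `a + b + c` and `b + c + d` are even but `a, b, c, d` are not all even, while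
`x ∈ 2L₂` exactly when `a, b, c, d` are all even. Both conditions imply the parity conditions
defining `L₁₀`, and together they exhaust them.
-/

def reducedDisc {R : Type*} [CommRing R] (a b c d : R) : R :=
  3 * b ^ 2 * c ^ 2 + 6 * a * b * c * d - 4 * a * c ^ 3 - 4 * b ^ 3 * d - a ^ 2 * d ^ 2

theorem discZ_mk_div_27 (a b c d : ℤ) :
    discZ (a, 3 * b, 3 * c, d) / 27 = reducedDisc a b c d := by
  have h : discZ (a, 3 * b, 3 * c, d) = 27 * reducedDisc a b c d := by
    simp only [discZ, reducedDisc]; ring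
  rw [h, Int.mul_ediv_cancel_left _ (by norm_num)]

theorem map_reducedDisc {R S : Type*} [CommRing R] [CommRing S] (f : R →+* S) (a b c d : R) :
    f (reducedDisc a b c d) = reducedDisc (f a) (f b) (f c) (f d) := by
  simp only [reducedDisc, map_sub, map_add, map_mul, map_pow, map_ofNat]

theorem reducedDisc_zmod_eight_eq_three_iff (a b c d : ZMod 8) :
    reducedDisc a b c d = 3 ↔
      let π := ZMod.castHom (show 2 ∣ 8 by norm_num) (ZMod 2)
      π (a + b + c) = 0 ∧ π (b + c + d) = 0 ∧ ¬(π a = 0 ∧ π b = 0 ∧ π c = 0 ∧ π d = 0) := by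
  revert a b c d; unfold reducedDisc; decide

theorem reducedDisc_modEq_three_iff (a b c d : ℤ) :
    reducedDisc a b c d ≡ 3 [ZMOD 8] ↔
      2 ∣ a + b + c ∧ 2 ∣ b + c + d ∧ ¬(2 ∣ a ∧ 2 ∣ b ∧ 2 ∣ c ∧ 2 ∣ d) := by
  refine (ZMod.intCast_eq_intCast_iff _ 3 8).symm.trans ?_
  rw [← eq_intCast (Int.castRingHom (ZMod 8)), map_reducedDisc, Int.cast_ofNat,
    reducedDisc_zmod_eight_eq_three_iff]
  simp only [eq_intCast, ZMod.castHom_apply, ← Int.cast_add,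
    ZMod.cast_intCast (show 2 ∣ 8 by norm_num), ZMod.intCast_zmod_eq_zero_iff_dvd, Nat.cast_ofNat]

theorem mem_L₂_iff {x : ℤ × ℤ × ℤ × ℤ} : x ∈ L₂ ↔ ∃ a b c d : ℤ, x = (a, 3 * b, 3 * c, d) := by
  constructor
  · rintro ⟨⟨b, hb⟩, ⟨c, hc⟩⟩
    exact ⟨x.1, b, c, x.2.2.2, by ext <;> simp [hb, hc]⟩
  · rintro ⟨a, b, c, d, rfl⟩
    exact ⟨⟨b, rfl⟩, ⟨c, rfl⟩⟩

theorem L₁₀_subset_L₂ : L₁₀ ⊆ L₂ := fun _ hx => ⟨hx.1, hx.2.1⟩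

theorem doubleL₂_subset_L₂ : doubleL₂ ⊆ L₂ := by
  rintro _ ⟨y, ⟨hb, hc⟩, rfl⟩
  exact ⟨dvd_mul_of_dvd_right hb 2, dvd_mul_of_dvd_right hc 2⟩

theorem mk_mem_L₁₀_iff (a b c d : ℤ) :
    (a, 3 * b, 3 * c, d) ∈ L₁₀ ↔ 2 ∣ a + b + c ∧ 2 ∣ b + c + d := by
  simp [L₁₀]

theorem mk_mem_doubleL₂_iff (a b c d : ℤ) :
    (a, 3 * b, 3 * c, d) ∈ doubleL₂ ↔ 2 ∣ a ∧ 2 ∣ b ∧ 2 ∣ c ∧ 2 ∣ d := by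
  constructor
  · rintro ⟨⟨a', b', c', d'⟩, -, hy⟩
    simp only [Prod.smul_mk, smul_eq_mul, Prod.mk.injEq] at hy
    omega
  · rintro ⟨⟨a', rfl⟩, ⟨b', rfl⟩, ⟨c', rfl⟩, ⟨d', rfl⟩⟩
    exact ⟨(a', 3 * b', 3 * c', d'), ⟨⟨b', rfl⟩, ⟨c', rfl⟩⟩, by simp only [Prod.smul_mk]; ring_nf⟩

theorem mk_mem_reducedDisc_three_iff (a b c d : ℤ) :
    (a, 3 * b, 3 * c, d) ∈ {x ∈ L₂ | discZ x / 27 ≡ 3 [ZMOD 8]} ↔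
      2 ∣ a + b + c ∧ 2 ∣ b + c + d ∧ ¬(2 ∣ a ∧ 2 ∣ b ∧ 2 ∣ c ∧ 2 ∣ d) := by
  rw [Set.mem_ofPred_eq, discZ_mk_div_27, reducedDisc_modEq_three_iff]
  exact and_iff_right (mem_L₂_iff.mpr ⟨a, b, c, d, rfl⟩)

theorem stmt9 :
    L₁₀ = doubleL₂ ∪ {x ∈ L₂ | discZ x / 27 ≡ 3 [ZMOD 8]} ∧
      doubleL₂ ∩ {x ∈ L₂ | discZ x / 27 ≡ 3 [ZMOD 8]} = ∅ := by
  have hS : {x ∈ L₂ | discZ x / 27 ≡ 3 [ZMOD 8]} ⊆ L₂ := fun _ hx => hx.1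
  constructor
  · ext x
    by_cases hx : x ∈ L₂
    · obtain ⟨a, b, c, d, rfl⟩ := mem_L₂_iff.mp hx
      rw [Set.mem_union, mk_mem_L₁₀_iff, mk_mem_doubleL₂_iff, mk_mem_reducedDisc_three_iff]
      omega
    · exact iff_of_false (hx ∘ (L₁₀_subset_L₂ ·))
        (hx ∘ (Set.union_subset doubleL₂_subset_L₂ hS ·))
  · refine Set.eq_empty_of_forall_notMem fun x ⟨hd, hq⟩ => ?_
    obtain ⟨a, b, c, d, rfl⟩ := mem_L₂_iff.mp hq.1
    exact ((mk_mem_reducedDisc_three_iff a b c d).mp hq).2.2 ((mk_mem_doubleL₂_iff a b c d).mp hd)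
end
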